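/- arXiv:0707.4213 — 3 statements merged into one kernel-verified Lean document; each statement's English description precedes it below -/
import Mathlib

section
/- Let n ≥ 1 and A = ℤ[x]/(x^{n+1}), B = A ⊗_ℤ A, and set ν = Σ_{i=0}^{n} x^i ⊗ x^{n−i} ∈ B. Then the annihilator of the element x ⊗ 1 − 1 ⊗ x in B equals the principal ideal of B generated by ν; that is, for z ∈ B one has (x ⊗ 1 − 1 ⊗ x)·z = 0 if and only if z = ν·w for some w ∈ B. -/
/-!
Over its left factor, `B` is a free `A`-module with basis `1, y, …, y ^ n`, where `y = 1 ⊗ x`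
and `y ^ (n + 1) = 0`. If `(x ⊗ 1 - y) z = 0` then `y ^ k z = x ^ k z` for all `k`, and comparing
the top coordinates of `y ^ (n - j) z = x ^ (n - j) z` shows that the `j`-th coordinate of `z` is
`x ^ (n - j) c`, where `c` is its top coordinate; hence `z = (c ⊗ 1) ν`. Conversely
`(x ⊗ 1 - y) ν = x ^ (n + 1) ⊗ 1 - 1 ⊗ x ^ (n + 1) = 0` by the geometric-sum identity.
-/

open Polynomial TensorProduct

noncomputable section

/-- `A = ℤ[x]/(x^{n+1})`, the truncated polynomial ring. -/
abbrev A (n : ℕ) : Type := AdjoinRoot ((X : ℤ[X]) ^ (n + 1))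

/-- `B = A ⊗_ℤ A`. -/
abbrev B (n : ℕ) : Type := A n ⊗[ℤ] A n

/-- The class of `X` in `A`, i.e. the element `x`. -/
abbrev xA (n : ℕ) : A n := AdjoinRoot.root _

/-- `ν = Σ_{i=0}^{n} x^i ⊗ x^{n−i} ∈ B`. -/
def nu (n : ℕ) : B n :=
  ∑ i ∈ Finset.range (n + 1), ((xA n) ^ i) ⊗ₜ[ℤ] ((xA n) ^ (n - i))

open Finset

section

variable {S T : Type*} [CommRing S] [CommRing T] [Algebra S T] {n : ℕ}

theorem sub_mul_geom_sum₂_eq_zero {u v : T} (hu : u ^ (n + 1) = 0) (hv : v ^ (n + 1) = 0) :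
    (u - v) * ∑ i ∈ range (n + 1), u ^ i * v ^ (n - i) = 0 := by
  simpa [hu, hv, mul_comm] using geom_sum₂_mul u v (n + 1)

namespace Module.Basis

variable (b : Basis (Fin (n + 1)) S T) {y : T}

theorem repr_pow_last (hb : ∀ i, b i = y ^ (i : ℕ)) (hy : y ^ (n + 1) = 0) (m : ℕ) :
    b.repr (y ^ m) (Fin.last n) = if m = n then 1 else 0 := by
  rcases lt_or_ge m (n + 1) with hm | hm
  · rw [← Fin.val_mk hm, ← hb, repr_self_apply]
    simp [Fin.ext_iff]
  · rw [pow_eq_zero_of_le hm hy, map_zero, if_neg (by omega), Finsupp.zero_apply]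

theorem repr_pow_rev_mul_last (hb : ∀ i, b i = y ^ (i : ℕ)) (hy : y ^ (n + 1) = 0) (z : T)
    (j : Fin (n + 1)) : b.repr (y ^ (j.rev : ℕ) * z) (Fin.last n) = b.repr z j := by
  have hrev : ∀ i : Fin (n + 1), (j.rev : ℕ) + i = n ↔ j = i := by
    intro i
    rw [Fin.val_rev, Fin.ext_iff]
    omega
  conv_lhs => rw [← b.sum_repr z]
  simp_rw [mul_sum, map_sum, Finsupp.finsetSum_apply, mul_smul_comm, map_smul, hb, ← pow_add,
    Finsupp.smul_apply, b.repr_pow_last hb hy, hrev, smul_eq_mul, mul_ite, mul_one, mul_zero,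
    sum_ite_eq, if_pos (mem_univ _)]

theorem exists_eq_smul_geom_sum₂_of_sub_mul_eq_zero (hb : ∀ i, b i = y ^ (i : ℕ))
    (hy : y ^ (n + 1) = 0) (a : S) {z : T} (h : (algebraMap S T a - y) * z = 0) :
    ∃ c : S, z = c • ∑ i ∈ range (n + 1), algebraMap S T a ^ i * y ^ (n - i) := by
  have hyz : y * z = algebraMap S T a * z := by
    rw [sub_mul, sub_eq_zero] at h
    exact h.symm
  have hpow : ∀ k, y ^ k * z = a ^ k • z := by
    intro k
    rw [Algebra.smul_def, map_pow]
    induction k with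
    | zero => simp
    | succ k ih => rw [pow_succ, mul_assoc, hyz, mul_left_comm, ih, ← mul_assoc, ← pow_succ']
  have hcoeff : ∀ j, b.repr z j = a ^ (j.rev : ℕ) * b.repr z (Fin.last n) := by
    intro j
    rw [← b.repr_pow_rev_mul_last hb hy, hpow, map_smul, Finsupp.smul_apply, smul_eq_mul]
  refine ⟨b.repr z (Fin.last n), ?_⟩
  calc z = ∑ j, b.repr z j • b j := (b.sum_repr z).symm
    _ = b.repr z (Fin.last n) • ∑ j : Fin (n + 1), algebraMap S T a ^ (n - j) * y ^ (j : ℕ) := by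
      rw [smul_sum]
      refine sum_congr rfl fun j _ => ?_
      rw [hcoeff, hb, mul_comm, mul_smul, Algebra.smul_def (a ^ _), map_pow, Fin.val_rev,
        Nat.add_sub_add_right]
    _ = _ := by
      rw [Fin.sum_univ_eq_sum_range (fun j => algebraMap S T a ^ (n - j) * y ^ j),
        ← sum_range_reflect]
      refine congrArg _ (sum_congr rfl fun i hi => ?_)
      rw [mem_range] at hi
      rw [Nat.add_sub_cancel, Nat.sub_sub_self (by omega)]

end Module.Basis

end

def basisA (n : ℕ) : Module.Basis (Fin (n + 1)) ℤ (A n) :=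
  (AdjoinRoot.powerBasis' (monic_X_pow (n + 1))).basis.reindex (finCongr (natDegree_X_pow _))

theorem basisA_apply (n : ℕ) (i : Fin (n + 1)) : basisA n i = xA n ^ (i : ℕ) := by
  simp only [basisA, Module.Basis.reindex_apply, PowerBasis.basis_eq_pow]
  rfl

theorem xA_pow_succ (n : ℕ) : xA n ^ (n + 1) = 0 := by
  simpa using AdjoinRoot.eval₂_root ((X : ℤ[X]) ^ (n + 1))

theorem stmt1_general (n : ℕ) (z : B n) :
    ((xA n) ⊗ₜ[ℤ] (1 : A n) - (1 : A n) ⊗ₜ[ℤ] (xA n)) * z = 0 ↔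
      ∃ w : B n, z = nu n * w := by
  set y : B n := 1 ⊗ₜ xA n
  have hy : y ^ (n + 1) = 0 := by simp [y, Algebra.TensorProduct.tmul_pow, xA_pow_succ]
  have hx : (xA n ⊗ₜ[ℤ] (1 : A n)) ^ (n + 1) = 0 := by
    simp [Algebra.TensorProduct.tmul_pow, xA_pow_succ]
  have hnu : nu n = ∑ i ∈ range (n + 1), (xA n ⊗ₜ[ℤ] (1 : A n)) ^ i * y ^ (n - i) := by
    simp [nu, y, Algebra.TensorProduct.tmul_pow, Algebra.TensorProduct.tmul_mul_tmul]
  have hb : ∀ i, Algebra.TensorProduct.basis (A n) (basisA n) i = y ^ (i : ℕ) := by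
    simp [Algebra.TensorProduct.basis_apply, basisA_apply, y, Algebra.TensorProduct.tmul_pow]
  constructor
  · intro h
    obtain ⟨c, rfl⟩ :=
      (Algebra.TensorProduct.basis (A n) (basisA n)).exists_eq_smul_geom_sum₂_of_sub_mul_eq_zero
        hb hy (xA n) h
    exact ⟨c ⊗ₜ 1, by rw [hnu, Algebra.smul_def, mul_comm]; rfl⟩
  · rintro ⟨w, rfl⟩
    rw [← mul_assoc, hnu, sub_mul_geom_sum₂_eq_zero hx hy, zero_mul]

/-- the annihilator of `x ⊗ 1 − 1 ⊗ x` in `B` is the principal ideal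
generated by `ν`. -/
theorem stmt1 (n : ℕ) (hn : 1 ≤ n) (z : B n) :
    ((xA n) ⊗ₜ[ℤ] (1 : A n) - (1 : A n) ⊗ₜ[ℤ] (xA n)) * z = 0 ↔
      ∃ w : B n, z = nu n * w :=
  stmt1_general n z

end
end

section
/- Let R₁ = ℤ[x,u,t]/(x², u², ux, 2xt) with Δ₁ : R₁ → R₁ the additive map determined on the monomial basis by Δ₁(t^k) = 0, Δ₁(t^k x) = 0, and Δ₁(t^k u) = −(2k+1)·t^k for all k ≥ 0. Let R₂ = ℤ[a,b,v]/(a², b², ab, 2av) with Δ₂ : R₂ → R₂ the additive map determined on the monomial basis by Δ₂(v^k) = 0, Δ₂(v^k a) = 0, and Δ₂(v^k b) = (2k+1)·v^k + a·v^{k+1} for all k ≥ 0. Then there is no ring isomorphism Φ : R₁ → R₂ satisfying Φ ∘ Δ₁ = Δ₂ ∘ Φ with Φ(x) ∈ {a, −a}, Φ(u) ∈ {b, −b}, and Φ(t) ∈ {v, −v, v + av², −v + av²}. -/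
open MvPolynomial

noncomputable section

/-- The ideal `(x², u², ux, 2xt)` of `ℤ[x,u,t]`, with `x = X 0`, `u = X 1`, `t = X 2`. -/
def I1 : Ideal (MvPolynomial (Fin 3) ℤ) :=
  Ideal.span {X 0 ^ 2, X 1 ^ 2, X 1 * X 0, 2 * X 0 * X 2}

/-- `R₁ = ℤ[x,u,t]/(x², u², ux, 2xt)`. -/
abbrev R1 : Type := MvPolynomial (Fin 3) ℤ ⧸ I1

def x1 : R1 := Ideal.Quotient.mk I1 (X 0)
def u1 : R1 := Ideal.Quotient.mk I1 (X 1)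
def t1 : R1 := Ideal.Quotient.mk I1 (X 2)

/-- The ideal `(a², b², ab, 2av)` of `ℤ[a,b,v]`, with `a = X 0`, `b = X 1`, `v = X 2`. -/
def I2 : Ideal (MvPolynomial (Fin 3) ℤ) :=
  Ideal.span {X 0 ^ 2, X 1 ^ 2, X 0 * X 1, 2 * X 0 * X 2}

/-- `R₂ = ℤ[a,b,v]/(a², b², ab, 2av)`. -/
abbrev R2 : Type := MvPolynomial (Fin 3) ℤ ⧸ I2

def a2 : R2 := Ideal.Quotient.mk I2 (X 0)
def b2 : R2 := Ideal.Quotient.mk I2 (X 1)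
def v2 : R2 := Ideal.Quotient.mk I2 (X 2)

/-
Only the operator on `u` matters. Since `Δ₁ u = -1`, compatibility forces `Δ₂ (± b) = -1`,
i.e. `±(1 + a v) = -1` in `R₂`. The ring map `R₂ → (ℤ/2)[ε]` with `a ↦ ε`, `b ↦ 0`, `v ↦ 1`
respects the relations (the relation `2av = 0` is why we reduce mod 2); its `ε`-coefficient
vanishes on `±1` but is `1` on `±(1 + a v)`.
-/

lemma two_eq_zero_dualNumber_zmod_two : (2 : DualNumber (ZMod 2)) = 0 := by
  ext <;> rfl

namespace R2

lemma I2_le_ker_eval₂Hom : I2 ≤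
    RingHom.ker (eval₂Hom (Int.castRingHom (DualNumber (ZMod 2))) ![DualNumber.eps, 0, 1]) := by
  rw [I2, Ideal.span_le]
  rintro p (rfl | rfl | rfl | rfl) <;>
    simp [sq, DualNumber.eps_mul_eps, two_eq_zero_dualNumber_zmod_two]

def toDualNumber : R2 →+* DualNumber (ZMod 2) :=
  Ideal.Quotient.lift I2 _ fun _ hp => RingHom.mem_ker.1 (I2_le_ker_eval₂Hom hp)

lemma toDualNumber_a2 : toDualNumber a2 = DualNumber.eps := by
  simp [toDualNumber, a2]

lemma toDualNumber_v2 : toDualNumber v2 = 1 := by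
  simp [toDualNumber, v2]

def epsCoeff : R2 →+ ZMod 2 :=
  (TrivSqZeroExt.sndHom (ZMod 2) (ZMod 2)).toAddMonoidHom.comp
    toDualNumber.toAddMonoidHom

lemma epsCoeff_one : epsCoeff 1 = 0 := by
  simp [epsCoeff]

lemma epsCoeff_a2_mul_v2 : epsCoeff (a2 * v2) = 1 := by
  simp [epsCoeff, toDualNumber_a2, toDualNumber_v2]

end R2

/-- with `Δ₁` the additive map on `R₁` with `Δ₁(tᵏ) = 0`, `Δ₁(tᵏx) = 0`,
`Δ₁(tᵏu) = −(2k+1)·tᵏ`, and `Δ₂` the additive map on `R₂` with `Δ₂(vᵏ) = 0`,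
`Δ₂(vᵏa) = 0`, `Δ₂(vᵏb) = (2k+1)·vᵏ + a·v^{k+1}`, there is no ring isomorphism
`Φ : R₁ → R₂` with `Φ ∘ Δ₁ = Δ₂ ∘ Φ`, `Φ(x) ∈ {a, −a}`, `Φ(u) ∈ {b, −b}` and
`Φ(t) ∈ {v, −v, v + av², −v + av²}`. -/
theorem stmt16 (Δ₁ : R1 →+ R1) (Δ₂ : R2 →+ R2)
    (hΔ₁ : ∀ k : ℕ, Δ₁ (t1 ^ k) = 0 ∧ Δ₁ (t1 ^ k * x1) = 0 ∧
      Δ₁ (t1 ^ k * u1) = -((2 * (k : ℤ) + 1) • t1 ^ k))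
    (hΔ₂ : ∀ k : ℕ, Δ₂ (v2 ^ k) = 0 ∧ Δ₂ (v2 ^ k * a2) = 0 ∧
      Δ₂ (v2 ^ k * b2) = (2 * (k : ℤ) + 1) • v2 ^ k + a2 * v2 ^ (k + 1)) :
    ¬ ∃ Φ : R1 ≃+* R2,
        (∀ z : R1, Φ (Δ₁ z) = Δ₂ (Φ z)) ∧
        (Φ x1 = a2 ∨ Φ x1 = -a2) ∧
        (Φ u1 = b2 ∨ Φ u1 = -b2) ∧
        (Φ t1 = v2 ∨ Φ t1 = -v2 ∨ Φ t1 = v2 + a2 * v2 ^ 2 ∨ Φ t1 = -v2 + a2 * v2 ^ 2) := by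
  rintro ⟨Φ, hΦΔ, -, hΦu, -⟩
  have hΔ₁u : Δ₁ u1 = -1 := by simpa using (hΔ₁ 0).2.2
  have hΔ₂b : Δ₂ b2 = 1 + a2 * v2 := by simpa using (hΔ₂ 0).2.2
  have h0 : R2.epsCoeff (Δ₂ (Φ u1)) = 0 := by
    rw [← hΦΔ, hΔ₁u, map_neg, map_one, map_neg, R2.epsCoeff_one, neg_zero]
  have h1 : R2.epsCoeff (Δ₂ (Φ u1)) = 1 := by
    rcases hΦu with hΦu | hΦu <;>
      simp only [hΦu, hΔ₂b, map_neg, map_add, R2.epsCoeff_one, R2.epsCoeff_a2_mul_v2] <;> rfl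
  exact zero_ne_one (h0.symm.trans h1)

end
end

section
/- Let R₁ = ℤ[x,u,t]/(x², u², ux, 2xt) and R₂ = ℤ[a,b,v]/(a², b², ab, 2av). The assignment x ↦ a, u ↦ −b, t ↦ v extends to a ring isomorphism Φ : R₁ → R₂. Moreover, defining a parity grading on R₁ in which monomials t^k and t^k x are even and t^k u is odd (and correspondingly on R₂ with v^k, v^k a even and v^k b odd), and defining brackets on parity-homogeneous elements by {α,β}ᵢ = (−1)^{|α|}·Δᵢ(α·β) − (−1)^{|α|}·Δᵢ(α)·β − α·Δᵢ(β) (i = 1,2), where Δ₁ is the additive map with Δ₁(t^k) = Δ₁(t^k x) = 0 and Δ₁(t^k u) = −(2k+1)t^k, and Δ₂ is the additive map with Δ₂(v^k) = Δ₂(v^k a) = 0 and Δ₂(v^k b) = (2k+1)v^k + a v^{k+1}, the isomorphism Φ satisfies Φ({α,β}₁) = {Φ(α), Φ(β)}₂ for all parity-homogeneous α, β ∈ R₁. -/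
open MvPolynomial

noncomputable section

/-- The even part of `R₁`: the additive subgroup generated by the monomials `tᵏ`, `tᵏx`. -/
def even1 : AddSubgroup R1 :=
  AddSubgroup.closure {z : R1 | ∃ k : ℕ, z = t1 ^ k ∨ z = t1 ^ k * x1}

/-- The odd part of `R₁`: the additive subgroup generated by the monomials `tᵏu`. -/
def odd1 : AddSubgroup R1 :=
  AddSubgroup.closure {z : R1 | ∃ k : ℕ, z = t1 ^ k * u1}

/-- The even part of `R₂`: the additive subgroup generated by the monomials `vᵏ`, `vᵏa`. -/
def even2 : AddSubgroup R2 :=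
  AddSubgroup.closure {z : R2 | ∃ k : ℕ, z = v2 ^ k ∨ z = v2 ^ k * a2}

/-- The odd part of `R₂`: the additive subgroup generated by the monomials `vᵏb`. -/
def odd2 : AddSubgroup R2 :=
  AddSubgroup.closure {z : R2 | ∃ k : ℕ, z = v2 ^ k * b2}

/-!
`Φ` is induced by the automorphism `u ↦ -u` of `ℤ[x,u,t]`, which carries the relations of `R₁`
onto those of `R₂`. Both brackets are biadditive, so it suffices to compare them on pairs of
monomials. Write `Φ ∘ Δ₁ = Δ₂ ∘ Φ + D`: the defect `D` vanishes on the even monomials, sends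
`tᵏu` to `a vᵏ⁺¹`, and on monomials obeys the graded Leibniz rule
`D (α β) = D α · Φ β + (-1)^|α| Φ α · D β`. The bracket induced by such an odd derivation is
zero, so `Φ {α, β}₁ = {Φ α, Φ β}₂`.
-/

theorem AddMonoidHom.eqOn_closure₂ {M N P : Type*} [AddGroup M] [AddGroup N] [AddCommGroup P]
    {f g : M →+ N →+ P} {s : Set M} {t : Set N} (h : ∀ a ∈ s, ∀ b ∈ t, f a b = g a b) :
    ∀ a ∈ AddSubgroup.closure s, ∀ b ∈ AddSubgroup.closure t, f a b = g a b := by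
  intro a ha
  have hat : Set.EqOn (f a) (g a) t := fun b hb =>
    AddMonoidHom.eqOn_closure (f := f.flip b) (g := g.flip b) (fun a' ha' => h a' ha' b hb) ha
  exact fun b hb => AddMonoidHom.eqOn_closure hat hb

section BVBracket

variable {R S : Type*} [CommRing R] [CommRing S]

/-- The bracket `{α, β}` induced by `Δ`, for `α` of parity `n`. -/
def bvBracket (Δ : R →+ R) (n : ℕ) : R →+ R →+ R :=
  (-1 : ℤ) ^ n • (AddMonoidHom.mul.compr₂ Δ - AddMonoidHom.mul.comp Δ) -
    AddMonoidHom.mul.compl₂ Δ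

theorem bvBracket_apply (Δ : R →+ R) (n : ℕ) (α β : R) :
    bvBracket Δ n α β = (-1) ^ n * (Δ (α * β) - Δ α * β) - α * Δ β := by
  simp [bvBracket, zsmul_eq_mul]

theorem map_bvBracket_of_mem_closure (φ : R →+ S) {Δ : R →+ R} {Δ' : S →+ S} {n : ℕ}
    {s t : Set R} (h : ∀ α ∈ s, ∀ β ∈ t, φ (bvBracket Δ n α β) = bvBracket Δ' n (φ α) (φ β)) :
    ∀ α ∈ AddSubgroup.closure s, ∀ β ∈ AddSubgroup.closure t,
      φ (bvBracket Δ n α β) = bvBracket Δ' n (φ α) (φ β) :=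
  AddMonoidHom.eqOn_closure₂ (f := (bvBracket Δ n).compr₂ φ)
    (g := ((bvBracket Δ' n).comp φ).compl₂ φ) h

theorem map_bvBracket_eq_of_leibniz (φ : R →+* S) {Δ : R →+ R} {Δ' : S →+ S} {D : R → S}
    (hD : ∀ z, φ (Δ z) = Δ' (φ z) + D z) {n : ℕ} {α β : R}
    (h : (-1) ^ n * D (α * β) = (-1) ^ n * D α * φ β + φ α * D β) :
    φ (bvBracket Δ n α β) = bvBracket Δ' n (φ α) (φ β) := by
  rw [bvBracket_apply, bvBracket_apply]
  simp only [map_sub, map_mul, map_pow, map_neg, map_one, hD]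
  linear_combination h

end BVBracket

theorem x1_sq : x1 ^ 2 = 0 := by
  rw [x1, ← map_pow, Ideal.Quotient.eq_zero_iff_mem]; exact Ideal.subset_span (by simp)

theorem u1_sq : u1 ^ 2 = 0 := by
  rw [u1, ← map_pow, Ideal.Quotient.eq_zero_iff_mem]; exact Ideal.subset_span (by simp)

theorem u1_mul_x1 : u1 * x1 = 0 := by
  rw [u1, x1, ← map_mul, Ideal.Quotient.eq_zero_iff_mem]; exact Ideal.subset_span (by simp)

theorem two_mul_x1_mul_t1 : 2 * x1 * t1 = 0 := by
  rw [x1, t1, ← map_ofNat (Ideal.Quotient.mk I1), ← map_mul, ← map_mul,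
    Ideal.Quotient.eq_zero_iff_mem]
  exact Ideal.subset_span (by simp)

theorem a2_sq : a2 ^ 2 = 0 := by
  rw [a2, ← map_pow, Ideal.Quotient.eq_zero_iff_mem]; exact Ideal.subset_span (by simp)

theorem b2_sq : b2 ^ 2 = 0 := by
  rw [b2, ← map_pow, Ideal.Quotient.eq_zero_iff_mem]; exact Ideal.subset_span (by simp)

theorem a2_mul_b2 : a2 * b2 = 0 := by
  rw [a2, b2, ← map_mul, Ideal.Quotient.eq_zero_iff_mem]; exact Ideal.subset_span (by simp)

theorem two_mul_a2_mul_v2 : 2 * a2 * v2 = 0 := by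
  rw [a2, v2, ← map_ofNat (Ideal.Quotient.mk I2), ← map_mul, ← map_mul,
    Ideal.Quotient.eq_zero_iff_mem]
  exact Ideal.subset_span (by simp)

-- Negation on `R1`, `R2` comes from `Submodule.Quotient.addCommGroup`, so lemmas such as `neg_sq`
-- or `mul_neg` do not fire by `rw`/`simp` here; `ring` and `linear_combination` do see through it.
def phi : R1 →ₐ[ℤ] R2 :=
  Ideal.Quotient.liftₐ I1 (aeval ![a2, -b2, v2]) fun p hp => by
    refine (Ideal.span_le (I := RingHom.ker (aeval ![a2, -b2, v2]))).2 ?_ hp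
    rintro _ (rfl | rfl | rfl | rfl) <;> simp [RingHom.mem_ker]
    · exact a2_sq
    · linear_combination b2_sq
    · linear_combination -a2_mul_b2
    · exact two_mul_a2_mul_v2

def psi : R2 →ₐ[ℤ] R1 :=
  Ideal.Quotient.liftₐ I2 (aeval ![x1, -u1, t1]) fun p hp => by
    refine (Ideal.span_le (I := RingHom.ker (aeval ![x1, -u1, t1]))).2 ?_ hp
    rintro _ (rfl | rfl | rfl | rfl) <;> simp [RingHom.mem_ker]
    · exact x1_sq
    · linear_combination u1_sq
    · linear_combination -u1_mul_x1
    · exact two_mul_x1_mul_t1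

theorem phi_x1 : phi x1 = a2 := aeval_X _ 0
theorem phi_u1 : phi u1 = -b2 := aeval_X _ 1
theorem phi_t1 : phi t1 = v2 := aeval_X _ 2
theorem psi_a2 : psi a2 = x1 := aeval_X _ 0
theorem psi_b2 : psi b2 = -u1 := aeval_X _ 1
theorem psi_v2 : psi v2 = t1 := aeval_X _ 2

def Phi : R1 ≃+* R2 :=
  (AlgEquiv.ofAlgHom phi psi
    (Ideal.Quotient.algHom_ext ℤ <| MvPolynomial.algHom_ext fun i => by
      fin_cases i
      · exact (congrArg phi psi_a2).trans phi_x1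
      · exact (congrArg phi psi_b2).trans (by rw [map_neg, phi_u1, neg_neg] : phi (-u1) = b2)
      · exact (congrArg phi psi_v2).trans phi_t1)
    (Ideal.Quotient.algHom_ext ℤ <| MvPolynomial.algHom_ext fun i => by
      fin_cases i
      · exact (congrArg psi phi_x1).trans psi_a2
      · exact (congrArg psi phi_u1).trans (by rw [map_neg, psi_b2, neg_neg] : psi (-b2) = u1)
      · exact (congrArg psi phi_t1).trans psi_v2)).toRingEquiv

theorem Phi_x1 : Phi x1 = a2 := phi_x1
theorem Phi_u1 : Phi u1 = -b2 := phi_u1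
theorem Phi_t1 : Phi t1 = v2 := phi_t1

theorem Phi_t1_pow (k : ℕ) : Phi (t1 ^ k) = v2 ^ k := by rw [map_pow, Phi_t1]

theorem Phi_t1_pow_mul_x1 (k : ℕ) : Phi (t1 ^ k * x1) = v2 ^ k * a2 := by
  rw [map_mul, Phi_t1_pow, Phi_x1]

theorem Phi_t1_pow_mul_u1 (k : ℕ) : Phi (t1 ^ k * u1) = -(v2 ^ k * b2) := by
  rw [map_mul, Phi_t1_pow, Phi_u1]; ring

theorem Phi_mem_even2 {z : R1} (hz : z ∈ even1) : Phi z ∈ even2 := by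
  refine (AddSubgroup.closure_le (K := even2.comap Phi.toAddMonoidHom)).2 ?_ hz
  rintro _ ⟨k, rfl | rfl⟩
  · exact AddSubgroup.subset_closure ⟨k, Or.inl (Phi_t1_pow k)⟩
  · exact AddSubgroup.subset_closure ⟨k, Or.inr (Phi_t1_pow_mul_x1 k)⟩

theorem Phi_mem_odd2 {z : R1} (hz : z ∈ odd1) : Phi z ∈ odd2 := by
  refine (AddSubgroup.closure_le (K := odd2.comap Phi.toAddMonoidHom)).2 ?_ hz
  rintro _ ⟨k, rfl⟩
  show Phi (t1 ^ k * u1) ∈ odd2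
  rw [Phi_t1_pow_mul_u1]
  exact neg_mem (AddSubgroup.subset_closure ⟨k, rfl⟩)

def IsDelta1 (Δ : R1 →+ R1) : Prop :=
  ∀ k : ℕ, Δ (t1 ^ k) = 0 ∧ Δ (t1 ^ k * x1) = 0 ∧
    Δ (t1 ^ k * u1) = -((2 * (k : ℤ) + 1) • t1 ^ k)

def IsDelta2 (Δ : R2 →+ R2) : Prop :=
  ∀ k : ℕ, Δ (v2 ^ k) = 0 ∧ Δ (v2 ^ k * a2) = 0 ∧
    Δ (v2 ^ k * b2) = (2 * (k : ℤ) + 1) • v2 ^ k + a2 * v2 ^ (k + 1)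

def evenMonomials1 : Set R1 := {z | ∃ k : ℕ, z = t1 ^ k ∨ z = t1 ^ k * x1}

def oddMonomials1 : Set R1 := {z | ∃ k : ℕ, z = t1 ^ k * u1}

section Defect

variable (Δ₁ : R1 →+ R1) (Δ₂ : R2 →+ R2)

def defect : R1 →+ R2 := Phi.toAddMonoidHom.comp Δ₁ - Δ₂.comp Phi.toAddMonoidHom

theorem defect_apply (z : R1) : defect Δ₁ Δ₂ z = Phi (Δ₁ z) - Δ₂ (Phi z) := rfl

theorem Phi_map_eq_map_Phi_add_defect (z : R1) :
    Phi (Δ₁ z) = Δ₂ (Phi z) + defect Δ₁ Δ₂ z :=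
  (add_sub_cancel _ _).symm

variable {Δ₁ Δ₂}

theorem defect_t1_pow (h₁ : IsDelta1 Δ₁) (h₂ : IsDelta2 Δ₂) (k : ℕ) :
    defect Δ₁ Δ₂ (t1 ^ k) = 0 := by
  rw [defect_apply, (h₁ k).1, Phi_t1_pow, (h₂ k).1, map_zero, sub_zero]

theorem defect_t1_pow_mul_x1 (h₁ : IsDelta1 Δ₁) (h₂ : IsDelta2 Δ₂) (k : ℕ) :
    defect Δ₁ Δ₂ (t1 ^ k * x1) = 0 := by
  rw [defect_apply, (h₁ k).2.1, Phi_t1_pow_mul_x1, (h₂ k).2.1, map_zero, sub_zero]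

theorem defect_t1_pow_mul_u1 (h₁ : IsDelta1 Δ₁) (h₂ : IsDelta2 Δ₂) (k : ℕ) :
    defect Δ₁ Δ₂ (t1 ^ k * u1) = a2 * v2 ^ (k + 1) := by
  rw [defect_apply, (h₁ k).2.2, Phi_t1_pow_mul_u1, map_neg, map_neg, map_zsmul, (h₂ k).2.2,
    Phi_t1_pow]
  ring

theorem defect_leibniz_even (h₁ : IsDelta1 Δ₁) (h₂ : IsDelta2 Δ₂) {α β : R1}
    (hα : α ∈ evenMonomials1) (hβ : β ∈ evenMonomials1 ∨ β ∈ oddMonomials1) :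
    (-1) ^ 0 * defect Δ₁ Δ₂ (α * β) =
      (-1) ^ 0 * defect Δ₁ Δ₂ α * Phi β + Phi α * defect Δ₁ Δ₂ β := by
  have d₀ := defect_t1_pow h₁ h₂
  have dₓ := defect_t1_pow_mul_x1 h₁ h₂
  have dᵤ := defect_t1_pow_mul_u1 h₁ h₂
  obtain ⟨k, rfl | rfl⟩ := hα <;> obtain ⟨l, rfl | rfl⟩ | ⟨l, rfl⟩ := hβ
  · rw [← pow_add, d₀, d₀, d₀]; ring
  · rw [show t1 ^ k * (t1 ^ l * x1) = t1 ^ (k + l) * x1 by ring, dₓ, d₀, dₓ]; ring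
  · rw [show t1 ^ k * (t1 ^ l * u1) = t1 ^ (k + l) * u1 by ring, dᵤ, d₀, dᵤ, Phi_t1_pow]; ring
  · rw [show t1 ^ k * x1 * t1 ^ l = t1 ^ (k + l) * x1 by ring, dₓ, dₓ, d₀]; ring
  · rw [show t1 ^ k * x1 * (t1 ^ l * x1) = 0 by linear_combination t1 ^ k * t1 ^ l * x1_sq,
      map_zero, dₓ, dₓ]; ring
  · rw [show t1 ^ k * x1 * (t1 ^ l * u1) = 0 by linear_combination t1 ^ k * t1 ^ l * u1_mul_x1,
      map_zero, dₓ, dᵤ, Phi_t1_pow_mul_x1]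
    linear_combination -(v2 ^ k * v2 ^ (l + 1)) * a2_sq

theorem defect_leibniz_odd (h₁ : IsDelta1 Δ₁) (h₂ : IsDelta2 Δ₂) {α β : R1}
    (hα : α ∈ oddMonomials1) (hβ : β ∈ evenMonomials1 ∨ β ∈ oddMonomials1) :
    (-1) ^ 1 * defect Δ₁ Δ₂ (α * β) =
      (-1) ^ 1 * defect Δ₁ Δ₂ α * Phi β + Phi α * defect Δ₁ Δ₂ β := by
  have d₀ := defect_t1_pow h₁ h₂
  have dₓ := defect_t1_pow_mul_x1 h₁ h₂
  have dᵤ := defect_t1_pow_mul_u1 h₁ h₂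
  obtain ⟨k, rfl⟩ := hα
  obtain ⟨l, rfl | rfl⟩ | ⟨l, rfl⟩ := hβ
  · rw [show t1 ^ k * u1 * t1 ^ l = t1 ^ (k + l) * u1 by ring, dᵤ, dᵤ, d₀, Phi_t1_pow]; ring
  · rw [show t1 ^ k * u1 * (t1 ^ l * x1) = 0 by linear_combination t1 ^ k * t1 ^ l * u1_mul_x1,
      map_zero, dᵤ, dₓ, Phi_t1_pow_mul_x1]
    linear_combination v2 ^ (k + 1) * v2 ^ l * a2_sq
  · rw [show t1 ^ k * u1 * (t1 ^ l * u1) = 0 by linear_combination t1 ^ k * t1 ^ l * u1_sq,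
      map_zero, dᵤ, dᵤ, Phi_t1_pow_mul_u1, Phi_t1_pow_mul_u1]
    ring

theorem Phi_bvBracket_of_leibniz {n : ℕ} {s : Set R1}
    (h : ∀ α ∈ s, ∀ β, β ∈ evenMonomials1 ∨ β ∈ oddMonomials1 →
      (-1) ^ n * defect Δ₁ Δ₂ (α * β) =
        (-1) ^ n * defect Δ₁ Δ₂ α * Phi β + Phi α * defect Δ₁ Δ₂ β)
    {α β : R1} (hα : α ∈ AddSubgroup.closure s) (hβ : β ∈ even1 ∨ β ∈ odd1) :
    Phi (bvBracket Δ₁ n α β) = bvBracket Δ₂ n (Phi α) (Phi β) := by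
  have hmon : ∀ α ∈ s, ∀ β, β ∈ evenMonomials1 ∨ β ∈ oddMonomials1 →
      Phi (bvBracket Δ₁ n α β) = bvBracket Δ₂ n (Phi α) (Phi β) := fun α hα β hβ =>
    map_bvBracket_eq_of_leibniz (Phi : R1 →+* R2) (Phi_map_eq_map_Phi_add_defect Δ₁ Δ₂)
      (h α hα β hβ)
  rcases hβ with hβ | hβ
  · exact map_bvBracket_of_mem_closure Phi.toAddMonoidHom
      (fun α hα β hβ => hmon α hα β (.inl hβ)) α hα β hβ
  · exact map_bvBracket_of_mem_closure Phi.toAddMonoidHom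
      (fun α hα β hβ => hmon α hα β (.inr hβ)) α hα β hβ

end Defect

/-- the assignment `x ↦ a`, `u ↦ −b`, `t ↦ v` extends to a ring isomorphism
`Φ : R₁ → R₂`, which preserves the parity grading and intertwines the Gerstenhaber
brackets `{α,β}ᵢ = (−1)^{|α|}·Δᵢ(α·β) − (−1)^{|α|}·Δᵢ(α)·β − α·Δᵢ(β)` induced by the
BV-operators `Δ₁` (with `Δ₁(tᵏ) = Δ₁(tᵏx) = 0`, `Δ₁(tᵏu) = −(2k+1)tᵏ`) and `Δ₂` (with
`Δ₂(vᵏ) = Δ₂(vᵏa) = 0`, `Δ₂(vᵏb) = (2k+1)vᵏ + av^{k+1}`) on parity-homogeneous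
elements. -/
theorem stmt17 (Δ₁ : R1 →+ R1) (Δ₂ : R2 →+ R2)
    (hΔ₁ : ∀ k : ℕ, Δ₁ (t1 ^ k) = 0 ∧ Δ₁ (t1 ^ k * x1) = 0 ∧
      Δ₁ (t1 ^ k * u1) = -((2 * (k : ℤ) + 1) • t1 ^ k))
    (hΔ₂ : ∀ k : ℕ, Δ₂ (v2 ^ k) = 0 ∧ Δ₂ (v2 ^ k * a2) = 0 ∧
      Δ₂ (v2 ^ k * b2) = (2 * (k : ℤ) + 1) • v2 ^ k + a2 * v2 ^ (k + 1)) :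
    ∃ Φ : R1 ≃+* R2,
      Φ x1 = a2 ∧ Φ u1 = -b2 ∧ Φ t1 = v2 ∧
      (∀ z ∈ even1, Φ z ∈ even2) ∧ (∀ z ∈ odd1, Φ z ∈ odd2) ∧
      ∀ α β : R1, (β ∈ even1 ∨ β ∈ odd1) →
        (α ∈ even1 →
          Φ (Δ₁ (α * β) - Δ₁ α * β - α * Δ₁ β) =
            Δ₂ (Φ α * Φ β) - Δ₂ (Φ α) * Φ β - Φ α * Δ₂ (Φ β)) ∧
        (α ∈ odd1 →
          Φ (-Δ₁ (α * β) + Δ₁ α * β - α * Δ₁ β) =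
            -Δ₂ (Φ α * Φ β) + Δ₂ (Φ α) * Φ β - Φ α * Δ₂ (Φ β)) := by
  refine ⟨Phi, Phi_x1, Phi_u1, Phi_t1, fun _ => Phi_mem_even2, fun _ => Phi_mem_odd2,
    fun α β hβ => ⟨fun hα => ?_, fun hα => ?_⟩⟩
  · convert Phi_bvBracket_of_leibniz
      (fun _ hα _ hβ => defect_leibniz_even hΔ₁ hΔ₂ hα hβ) hα hβ using 2 <;>
      rw [bvBracket_apply] <;> ring
  · convert Phi_bvBracket_of_leibniz
      (fun _ hα _ hβ => defect_leibniz_odd hΔ₁ hΔ₂ hα hβ) hα hβ using 2 <;>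
      rw [bvBracket_apply] <;> ring

end
end
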